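/- arXiv:2506.01467 — 3 statements merged into one kernel-verified Lean document; each statement's English description precedes it below -/
import Mathlib

section
/- Let z ∈ ℝ^K and let u be z sorted in descending order. Let ρ be the largest index such that u_ρ − (1/ρ)(Σ_{j≤ρ} u_j − 1) > 0, set τ = (1/ρ)(Σ_{j≤ρ} u_j − 1), and define x* by x*_i = max(z_i − τ, 0). Then x* lies in the probability simplex Δ^K = {x ∈ ℝ^K : x_i ≥ 0, Σ_i x_i = 1}. -/
/-- Feasibility of the von Neumann projection onto the probability simplex:
the thresholded vector is nonnegative and sums to 1. -/
theorem stmt_3 {K : ℕ} (hK : 1 ≤ K) (z u : Fin K → ℝ)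
    (σ : Equiv.Perm (Fin K)) (hu : u = z ∘ σ)
    (hsort : ∀ i j : Fin K, i ≤ j → u j ≤ u i)
    (ρ : Fin K)
    (hρ : u ρ - ((ρ : ℕ) + 1 : ℝ)⁻¹ * (∑ j ∈ Finset.Iic ρ, u j - 1) > 0)
    (hρmax : ∀ j : Fin K, ρ < j →
      ¬ (u j - ((j : ℕ) + 1 : ℝ)⁻¹ * (∑ i ∈ Finset.Iic j, u i - 1) > 0))
    (τ : ℝ) (hτ : τ = ((ρ : ℕ) + 1 : ℝ)⁻¹ * (∑ j ∈ Finset.Iic ρ, u j - 1)) :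
    (∀ i, 0 ≤ max (z i - τ) 0) ∧ ∑ i, max (z i - τ) 0 = 1 := by
  have hρpos : (0:ℝ) < (ρ:ℕ) + 1 := by positivity
  have hτρ : ((ρ:ℕ) + 1 : ℝ) * τ = ∑ j ∈ Finset.Iic ρ, u j - 1 := by
    rw [hτ]; field_simp
  have key : ∀ n : ℕ, ∀ j : Fin K, (j : ℕ) = n → ρ < j → u j ≤ τ := by
    intro n
    induction n using Nat.strong_induction_on with
    | _ n ih =>
      intro j hjn hj
      have hmax := hρmax j hj
      push_neg at hmax
      have hjpos : (0:ℝ) < (j:ℕ) + 1 := by positivity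
      have hinv : ((j:ℕ) + 1 : ℝ) * (((j:ℕ) + 1 : ℝ)⁻¹ * (∑ i ∈ Finset.Iic j, u i - 1))
          = ∑ i ∈ Finset.Iic j, u i - 1 := by field_simp
      have h1 : ((j:ℕ) + 1 : ℝ) * u j ≤ ∑ i ∈ Finset.Iic j, u i - 1 := by
        have := mul_le_mul_of_nonneg_left (by linarith [hmax] :
          u j ≤ ((j:ℕ) + 1 : ℝ)⁻¹ * (∑ i ∈ Finset.Iic j, u i - 1)) hjpos.le
        linarith [hinv, this]
      have hρj : ρ ≤ j := le_of_lt hj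
      have hsplit : Finset.Iic j = Finset.Iic ρ ∪ Finset.Ioc ρ j := by
        ext i; simp only [Finset.mem_Iic, Finset.mem_union, Finset.mem_Ioc]
        constructor
        · intro h; rcases le_or_gt i ρ with h' | h'
          · exact Or.inl h'
          · exact Or.inr ⟨h', h⟩
        · rintro (h | ⟨_, h⟩) <;> [exact le_trans h hρj; exact h]
      have hdisj : Disjoint (Finset.Iic ρ) (Finset.Ioc ρ j) := by
        simp only [Finset.disjoint_left, Finset.mem_Iic, Finset.mem_Ioc]
        intro a ha ⟨h1', _⟩; exact absurd ha (not_le.mpr h1')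
      have hsum : ∑ i ∈ Finset.Iic j, u i
          = ∑ i ∈ Finset.Iic ρ, u i + ∑ i ∈ Finset.Ioc ρ j, u i := by
        rw [hsplit, Finset.sum_union hdisj]
      have hIoc : Finset.Ioc ρ j = insert j (Finset.Ioo ρ j) :=
        (Finset.Ioo_insert_right hj).symm
      have hjnotmem : j ∉ Finset.Ioo ρ j := by simp
      have hsum2 : ∑ i ∈ Finset.Ioc ρ j, u i
          = u j + ∑ i ∈ Finset.Ioo ρ j, u i := by
        rw [hIoc, Finset.sum_insert hjnotmem]
      have hOoo : ∑ i ∈ Finset.Ioo ρ j, u i ≤ ((Finset.Ioo ρ j).card : ℝ) * τ := by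
        have := Finset.sum_le_card_nsmul (Finset.Ioo ρ j) u τ (fun i hi => by
          simp only [Finset.mem_Ioo] at hi
          exact ih (i : ℕ) (hjn ▸ (Fin.lt_iff_val_lt_val.mp hi.2)) i rfl hi.1)
        simpa [nsmul_eq_mul] using this
      have hcard : ((Finset.Ioo ρ j).card : ℝ) = (j:ℕ) - (ρ:ℕ) - 1 := by
        have hlt : (ρ:ℕ) + 1 ≤ (j:ℕ) := hj
        have hc : (Finset.Ioo ρ j).card = (j:ℕ) - ((ρ:ℕ) + 1) := by
          rw [Fin.card_Ioo]; omega
        rw [hc, Nat.cast_sub hlt]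
        push_cast; ring
      have hcmul : ((ρ:ℕ) + 1 : ℝ) * τ + ((Finset.Ioo ρ j).card : ℝ) * τ
          = ((j:ℕ) : ℝ) * τ := by rw [hcard]; ring
      have hmul : ((j:ℕ) : ℝ) * u j ≤ ((j:ℕ) : ℝ) * τ := by
        linarith [h1, hsum, hsum2, hOoo, hτρ, hcmul]
      have hjge : (0:ℝ) < ((j:ℕ) : ℝ) := by
        have : (ρ:ℕ) < (j:ℕ) := hj
        exact_mod_cast Nat.pos_of_ne_zero (by omega)
      exact le_of_mul_le_mul_left hmul hjge
  have key' : ∀ j : Fin K, ρ < j → u j ≤ τ := fun j hj => key (j : ℕ) j rfl hj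
  have hgt : ∀ i : Fin K, i ≤ ρ → τ < u i := by
    intro i hi
    have h1 : u ρ ≤ u i := hsort i ρ hi
    rw [← hτ] at hρ
    linarith
  constructor
  · intro i; exact le_max_right _ _
  · have hperm : ∑ i, max (z i - τ) 0 = ∑ i, max (u i - τ) 0 := by
      rw [hu]
      exact (Equiv.sum_comp σ fun i => max (z i - τ) 0).symm
    rw [hperm]
    have huniv : (Finset.univ : Finset (Fin K)) = Finset.Iic ρ ∪ Finset.Ioi ρ := by
      ext i; simp [le_or_gt]
    have hdisj : Disjoint (Finset.Iic ρ) (Finset.Ioi ρ) := by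
      simp only [Finset.disjoint_left, Finset.mem_Iic, Finset.mem_Ioi]
      intro a ha h; exact absurd ha (not_le.mpr h)
    rw [huniv, Finset.sum_union hdisj]
    have h1 : ∑ i ∈ Finset.Iic ρ, max (u i - τ) 0 = ∑ i ∈ Finset.Iic ρ, (u i - τ) := by
      apply Finset.sum_congr rfl
      intro i hi
      simp only [Finset.mem_Iic] at hi
      exact max_eq_left (by linarith [hgt i hi])
    have h2 : ∑ i ∈ Finset.Ioi ρ, max (u i - τ) 0 = 0 := by
      apply Finset.sum_eq_zero
      intro i hi
      simp only [Finset.mem_Ioi] at hi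
      exact max_eq_right (by linarith [key' i hi])
    rw [h1, h2, add_zero, Finset.sum_sub_distrib, Finset.sum_const, Fin.card_Iic,
      nsmul_eq_mul]
    push_cast
    linarith [hτρ]
end

section
/- With notation as in the von Neumann simplex projection, the output x* with x*_i = max(z_i − τ, 0) is the unique Euclidean projection of z onto the probability simplex, i.e., x* = argmin_{x ∈ Δ^K} ‖x − z‖². -/
/-!
With `p i = max (z i - τ) 0`, the pointwise inequality `(x - p) (z - p) ≤ τ (x - p)` for `x ≥ 0`
sums, over two points `x, p` of the simplex, to `⟪x - p, z - p⟫ ≤ 0`; this is the variational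
characterisation of the projection and yields `‖x - z‖² ≥ ‖x - p‖² + ‖p - z‖²`. So it suffices
that `p` lies in the simplex, i.e. `∑ max (u j - τ) 0 = 1` for the sorted `u`. The entries up to
`ρ` exceed `τ` and sum to `(ρ + 1) τ + 1`; all later entries are at most `u (ρ + 1)`, and the
maximality of `ρ` at `ρ + 1` says exactly that `u (ρ + 1) ≤ τ`.
-/

open Finset

lemma mul_sub_max_sub_le {x z τ : ℝ} (hx : 0 ≤ x) :
    (x - max (z - τ) 0) * (z - max (z - τ) 0) ≤ τ * (x - max (z - τ) 0) := by
  rcases le_total z τ with h | h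
  · rw [max_eq_right (sub_nonpos.mpr h), sub_zero, sub_zero, mul_comm x]
    exact mul_le_mul_of_nonneg_right h hx
  · rw [max_eq_left (sub_nonneg.mpr h), sub_sub_cancel, mul_comm]

section Projection

variable {ι : Type*} [Fintype ι] {x z : ι → ℝ} {τ : ℝ}

lemma sum_sq_sub_max_add_sum_sq_le (hp : ∑ i, max (z i - τ) 0 = 1)
    (hx : ∀ i, 0 ≤ x i) (hxs : ∑ i, x i = 1) :
    ∑ i, (x i - max (z i - τ) 0) ^ 2 + ∑ i, (max (z i - τ) 0 - z i) ^ 2 ≤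
      ∑ i, (x i - z i) ^ 2 := by
  set p := fun i => max (z i - τ) 0
  have hinner : ∑ i, (x i - p i) * (z i - p i) ≤ 0 :=
    calc ∑ i, (x i - p i) * (z i - p i)
        ≤ ∑ i, τ * (x i - p i) := sum_le_sum fun i _ => mul_sub_max_sub_le (hx i)
      _ = 0 := by rw [← mul_sum, sum_sub_distrib, hxs, hp, sub_self, mul_zero]
  have hexpand : ∑ i, (x i - z i) ^ 2 = ∑ i, (x i - p i) ^ 2 + ∑ i, (p i - z i) ^ 2 -
      2 * ∑ i, (x i - p i) * (z i - p i) := by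
    rw [mul_sum, ← sum_add_distrib, ← sum_sub_distrib]
    exact sum_congr rfl fun i _ => by ring
  linarith

lemma eq_max_sub_of_sum_sq_eq (hp : ∑ i, max (z i - τ) 0 = 1)
    (hx : ∀ i, 0 ≤ x i) (hxs : ∑ i, x i = 1)
    (heq : ∑ i, (x i - z i) ^ 2 = ∑ i, (max (z i - τ) 0 - z i) ^ 2) :
    x = fun i => max (z i - τ) 0 := by
  have hle := sum_sq_sub_max_add_sum_sq_le hp hx hxs
  have hzero : ∑ i, (x i - max (z i - τ) 0) ^ 2 = 0 :=
    le_antisymm (by linarith) (sum_nonneg fun i _ => sq_nonneg _)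
  funext i
  have hi := (sum_eq_zero_iff_of_nonneg fun i _ => sq_nonneg _).mp hzero i (mem_univ i)
  exact sub_eq_zero.mp (pow_eq_zero_iff two_ne_zero |>.mp hi)

end Projection

section Threshold

variable {K : ℕ} {u : Fin K → ℝ} {ρ : Fin K}

noncomputable def simplexThreshold (u : Fin K → ℝ) (j : Fin K) : ℝ :=
  ((j : ℕ) + 1 : ℝ)⁻¹ * (∑ i ∈ Iic j, u i - 1)

lemma sum_Iic_eq_mul_simplexThreshold (u : Fin K → ℝ) (j : Fin K) :
    ∑ i ∈ Iic j, u i = ((j : ℕ) + 1) * simplexThreshold u j + 1 := by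
  rw [simplexThreshold, ← mul_assoc, mul_inv_cancel₀ (by positivity), one_mul, sub_add_cancel]

lemma simplexThreshold_lt_of_le (hu : Antitone u) (hρ : u ρ - simplexThreshold u ρ > 0)
    {i : Fin K} (hi : i ≤ ρ) : simplexThreshold u ρ < u i := by
  linarith [hu hi]

lemma le_simplexThreshold_of_lt (hu : Antitone u)
    (hρmax : ∀ j : Fin K, ρ < j → ¬ (u j - simplexThreshold u j > 0))
    {j : Fin K} (hj : ρ < j) : u j ≤ simplexThreshold u ρ := by
  have hsucc : (ρ : ℕ) + 1 < K := lt_of_le_of_lt (Fin.lt_def.mp hj) j.isLt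
  set k : Fin K := ⟨ρ + 1, hsucc⟩
  have hρk : ρ < k := Fin.lt_def.mpr (Nat.lt_succ_self _)
  have hkj : k ≤ j := Fin.le_def.mpr (Fin.lt_def.mp hj)
  have hIic : Iic k = insert k (Iic ρ) := by
    ext i
    simp only [mem_insert, mem_Iic, Fin.le_def, Fin.ext_iff, k]
    omega
  have hsum : ∑ i ∈ Iic k, u i = ∑ i ∈ Iic ρ, u i + u k := by
    rw [hIic, sum_insert (by simp [hρk]), add_comm]
  have hk : u k ≤ simplexThreshold u k := by
    simpa using hρmax k hρk
  -- the threshold at `k` is a weighted mean of the one at `ρ` and `u k`, so `hk` bounds `u k`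
  have hrel : ((ρ : ℕ) + 2 : ℝ) * simplexThreshold u k =
      ((ρ : ℕ) + 1) * simplexThreshold u ρ + u k := by
    have h := sum_Iic_eq_mul_simplexThreshold u k
    rw [hsum, sum_Iic_eq_mul_simplexThreshold u ρ] at h
    simp only [k, Nat.cast_add, Nat.cast_one] at h
    linarith
  have hρ0 : (0 : ℝ) ≤ (ρ : ℕ) := Nat.cast_nonneg _
  nlinarith [hu hkj]

lemma sum_max_sub_simplexThreshold (hu : Antitone u) (hρ : u ρ - simplexThreshold u ρ > 0)
    (hρmax : ∀ j : Fin K, ρ < j → ¬ (u j - simplexThreshold u j > 0)) :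
    ∑ j, max (u j - simplexThreshold u ρ) 0 = 1 := by
  set τ := simplexThreshold u ρ
  have hhead : ∑ j ∈ Iic ρ, max (u j - τ) 0 = ∑ j ∈ Iic ρ, (u j - τ) :=
    sum_congr rfl fun j hj =>
      max_eq_left (sub_nonneg.mpr (simplexThreshold_lt_of_le hu hρ (mem_Iic.mp hj)).le)
  have htail : ∑ j ∈ (Iic ρ)ᶜ, max (u j - τ) 0 = 0 :=
    sum_eq_zero fun j hj => max_eq_right <| sub_nonpos.mpr <|
      le_simplexThreshold_of_lt hu hρmax (by simpa using hj)
  rw [← sum_add_sum_compl (Iic ρ), hhead, htail, add_zero, sum_sub_distrib,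
    sum_Iic_eq_mul_simplexThreshold, sum_const, Fin.card_Iic, nsmul_eq_mul]
  push_cast
  ring

end Threshold

theorem stmt_4_general {K : ℕ} (z u : Fin K → ℝ)
    (σ : Equiv.Perm (Fin K)) (hu : u = z ∘ σ)
    (hsort : ∀ i j : Fin K, i ≤ j → u j ≤ u i)
    (ρ : Fin K)
    (hρ : u ρ - ((ρ : ℕ) + 1 : ℝ)⁻¹ * (∑ j ∈ Finset.Iic ρ, u j - 1) > 0)
    (hρmax : ∀ j : Fin K, ρ < j →
      ¬ (u j - ((j : ℕ) + 1 : ℝ)⁻¹ * (∑ i ∈ Finset.Iic j, u i - 1) > 0))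
    (τ : ℝ) (hτ : τ = ((ρ : ℕ) + 1 : ℝ)⁻¹ * (∑ j ∈ Finset.Iic ρ, u j - 1)) :
    (∀ x : Fin K → ℝ, (∀ i, 0 ≤ x i) → ∑ i, x i = 1 →
      ∑ i, (max (z i - τ) 0 - z i) ^ 2 ≤ ∑ i, (x i - z i) ^ 2) ∧
    (∀ x : Fin K → ℝ, (∀ i, 0 ≤ x i) → ∑ i, x i = 1 →
      ∑ i, (x i - z i) ^ 2 = ∑ i, (max (z i - τ) 0 - z i) ^ 2 →
      x = fun i => max (z i - τ) 0) := by
  have hsum : ∑ i, max (z i - τ) 0 = 1 := by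
    rw [← Equiv.sum_comp σ, hτ]
    subst hu
    exact sum_max_sub_simplexThreshold hsort hρ hρmax
  refine ⟨fun x hx hxs => ?_, fun x hx hxs heq => eq_max_sub_of_sum_sq_eq hsum hx hxs heq⟩
  have hle := sum_sq_sub_max_add_sum_sq_le hsum hx hxs
  have hnonneg : 0 ≤ ∑ i, (x i - max (z i - τ) 0) ^ 2 := sum_nonneg fun i _ => sq_nonneg _
  linarith

/-- The output of the von Neumann thresholding is the unique Euclidean
projection of `z` onto the probability simplex. -/
theorem stmt_4 {K : ℕ} (hK : 1 ≤ K) (z u : Fin K → ℝ)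
    (σ : Equiv.Perm (Fin K)) (hu : u = z ∘ σ)
    (hsort : ∀ i j : Fin K, i ≤ j → u j ≤ u i)
    (ρ : Fin K)
    (hρ : u ρ - ((ρ : ℕ) + 1 : ℝ)⁻¹ * (∑ j ∈ Finset.Iic ρ, u j - 1) > 0)
    (hρmax : ∀ j : Fin K, ρ < j →
      ¬ (u j - ((j : ℕ) + 1 : ℝ)⁻¹ * (∑ i ∈ Finset.Iic j, u i - 1) > 0))
    (τ : ℝ) (hτ : τ = ((ρ : ℕ) + 1 : ℝ)⁻¹ * (∑ j ∈ Finset.Iic ρ, u j - 1)) :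
    (∀ x : Fin K → ℝ, (∀ i, 0 ≤ x i) → ∑ i, x i = 1 →
      ∑ i, (max (z i - τ) 0 - z i) ^ 2 ≤ ∑ i, (x i - z i) ^ 2) ∧
    (∀ x : Fin K → ℝ, (∀ i, 0 ≤ x i) → ∑ i, x i = 1 →
      ∑ i, (x i - z i) ^ 2 = ∑ i, (max (z i - τ) 0 - z i) ^ 2 →
      x = fun i => max (z i - τ) 0) :=
  stmt_4_general z u σ hu hsort ρ hρ hρmax τ hτ
end

section
/- The Euclidean projection onto the probability simplex is the thresholding map z ↦ (max(z_i − τ, 0))_i for the unique τ ∈ ℝ satisfying Σ_i max(z_i − τ, 0) = 1; moreover such τ exists and is unique for any z ∈ ℝ^K. -/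
/-- There is a unique threshold `τ` with `∑ max (z i - τ) 0 = 1`, and for this
`τ` the thresholded vector is the Euclidean projection of `z` onto the
probability simplex. -/
theorem stmt_5 {K : ℕ} (hK : 1 ≤ K) (z : Fin K → ℝ) :
    (∃! τ : ℝ, ∑ i, max (z i - τ) 0 = 1) ∧
    ∀ τ : ℝ, ∑ i, max (z i - τ) 0 = 1 →
      (∀ i, 0 ≤ max (z i - τ) 0) ∧
      (∀ x : Fin K → ℝ, (∀ i, 0 ≤ x i) → ∑ i, x i = 1 →
        ∑ i, (max (z i - τ) 0 - z i) ^ 2 ≤ ∑ i, (x i - z i) ^ 2) := by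
  haveI hne : Nonempty (Fin K) := ⟨⟨0, by omega⟩⟩
  set f : ℝ → ℝ := fun τ => ∑ i, max (z i - τ) 0 with hfdef
  have hcont : Continuous f := by
    apply continuous_finset_sum
    intro i _
    exact (continuous_const.sub continuous_id).max continuous_const
  -- strict decrease at points where the value is 1
  have hstrict : ∀ τ₁ τ₂ : ℝ, τ₁ < τ₂ → f τ₂ = 1 → f τ₂ < f τ₁ := by
    intro τ₁ τ₂ hlt h2
    have hex : ∃ i : Fin K, 0 < max (z i - τ₂) 0 := by
      by_contra h
      push_neg at h
      have h0 : f τ₂ = 0 :=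
        Finset.sum_eq_zero fun i _ => le_antisymm (h i) (le_max_right _ _)
      rw [h0] at h2
      norm_num at h2
    obtain ⟨i₀, hi₀⟩ := hex
    apply Finset.sum_lt_sum
    · intro i _
      exact max_le_max (by linarith) le_rfl
    · refine ⟨i₀, Finset.mem_univ _, ?_⟩
      have h2' : 0 < z i₀ - τ₂ := by
        rcases lt_max_iff.mp hi₀ with h | h
        · linarith
        · norm_num at h
      have h1 : max (z i₀ - τ₂) 0 = z i₀ - τ₂ := max_eq_left h2'.le
      have : z i₀ - τ₂ < z i₀ - τ₁ := by linarith
      calc max (z i₀ - τ₂) 0 = z i₀ - τ₂ := h1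
        _ < z i₀ - τ₁ := this
        _ ≤ max (z i₀ - τ₁) 0 := le_max_left _ _
  -- existence by IVT
  set a : ℝ := Finset.univ.inf' Finset.univ_nonempty z - 1 with ha
  set b : ℝ := Finset.univ.sup' Finset.univ_nonempty z with hb
  have hfa : (1 : ℝ) ≤ f a := by
    have h1 : ∀ i : Fin K, (1 : ℝ) ≤ max (z i - a) 0 := by
      intro i
      have := Finset.inf'_le z (Finset.mem_univ i)
      have : 1 ≤ z i - a := by rw [ha]; linarith
      exact le_trans this (le_max_left _ _)
    calc (1 : ℝ) ≤ (K : ℝ) := by exact_mod_cast hK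
      _ = ∑ _i : Fin K, (1 : ℝ) := by simp
      _ ≤ f a := Finset.sum_le_sum fun i _ => h1 i
  have hfb : f b = 0 := by
    apply Finset.sum_eq_zero
    intro i _
    have := Finset.le_sup' z (Finset.mem_univ i)
    exact max_eq_right (by rw [hb]; linarith)
  have hab : a ≤ b := by
    obtain ⟨i₀⟩ := hne
    have h1 := Finset.inf'_le z (Finset.mem_univ i₀)
    have h2 := Finset.le_sup' z (Finset.mem_univ i₀)
    rw [ha, hb]; linarith
  have hmem : (1 : ℝ) ∈ Set.Icc (f b) (f a) := by
    rw [hfb]; exact ⟨by norm_num, hfa⟩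
  obtain ⟨τ, hτmem, hτ1⟩ := intermediate_value_Icc' hab hcont.continuousOn hmem
  have huniq : ∀ y : ℝ, f y = 1 → y = τ := by
    intro y hy
    by_contra hne'
    rcases lt_trichotomy y τ with h | h | h
    · have := hstrict y τ h hτ1
      rw [hτ1, hy] at this; exact lt_irrefl _ this
    · exact hne' h
    · have := hstrict τ y h hy
      rw [hτ1, hy] at this; exact lt_irrefl _ this
  refine ⟨⟨τ, hτ1, huniq⟩, ?_⟩
  intro σ hσ
  refine ⟨fun i => le_max_right _ _, ?_⟩
  intro x hx hxs
  set p : Fin K → ℝ := fun i => max (z i - σ) 0 with hp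
  have hpl : ∀ i, -σ ≤ p i - z i := by
    intro i
    rcases le_or_gt (z i - σ) 0 with h | h
    · have : p i = 0 := max_eq_right h
      rw [this]; linarith
    · have : p i = z i - σ := max_eq_left h.le
      rw [this]; ring_nf; linarith
  have hpτ : ∀ i, p i * (p i - z i) = p i * (-σ) := by
    intro i
    rcases le_or_gt (z i - σ) 0 with h | h
    · have : p i = 0 := max_eq_right h
      rw [this]; ring
    · have : p i = z i - σ := max_eq_left h.le
      rw [this]; ring
  have hsum_p : ∑ i, p i * (p i - z i) = -σ := by
    rw [Finset.sum_congr rfl fun i _ => hpτ i, ← Finset.sum_mul, hσ, one_mul]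
  have hsum_x : -σ ≤ ∑ i, x i * (p i - z i) := by
    have h1 : ∑ i, x i * (-σ) ≤ ∑ i, x i * (p i - z i) :=
      Finset.sum_le_sum fun i _ => mul_le_mul_of_nonneg_left (hpl i) (hx i)
    calc -σ = (∑ i, x i) * (-σ) := by rw [hxs, one_mul]
      _ = ∑ i, x i * (-σ) := by rw [Finset.sum_mul]
      _ ≤ _ := h1
  have hcross : 0 ≤ ∑ i, (x i - p i) * (p i - z i) := by
    have : ∑ i, (x i - p i) * (p i - z i)
        = ∑ i, x i * (p i - z i) - ∑ i, p i * (p i - z i) := by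
      rw [← Finset.sum_sub_distrib]
      exact Finset.sum_congr rfl fun i _ => by ring
    rw [this, hsum_p]
    linarith
  have hexp : ∑ i, (x i - z i) ^ 2
      = ∑ i, ((p i - z i) ^ 2 + (x i - p i) ^ 2 + 2 * ((x i - p i) * (p i - z i))) :=
    Finset.sum_congr rfl fun i _ => by ring
  have hsq : 0 ≤ ∑ i, (x i - p i) ^ 2 :=
    Finset.sum_nonneg fun i _ => sq_nonneg _
  calc ∑ i, (p i - z i) ^ 2
      ≤ ∑ i, (p i - z i) ^ 2 + (∑ i, (x i - p i) ^ 2 + 2 * ∑ i, (x i - p i) * (p i - z i)) := by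
        linarith
    _ = ∑ i, (x i - z i) ^ 2 := by
        rw [hexp, Finset.sum_add_distrib, Finset.sum_add_distrib, ← Finset.mul_sum]
        ring
end
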